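/- Fix d ≥ 1 and λ, ν ∈ W^d with |λ| ≥ |ν|, and set u_d(λ;ν;n) = Σ_{μ ∈ W^d, |μ| = n + |λ|} f(λ;μ)·f(ν;μ). Then Σ_{n≥0} u_d(λ;ν;n) t^{2n+|λ|−|ν|} / ( n!·(n+|λ|−|ν|)! ) = det( I_{λ_i − ν_j}(2t) )_{1≤i,j≤d} as formal power series in t over ℚ; equivalently, for every n ≥ 0, u_d(λ;ν;n) equals n!·(n+|λ|−|ν|)! times the coefficient of t^{2n+|λ|−|ν|} in that determinant, and every coefficient of t^m with m not of the form 2n+|λ|−|ν| vanishes. -/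

import Mathlib

open scoped BigOperators

/-- The `d`-dimensional Weyl chamber `W^d = {x ∈ ℤ^d : x₁ > x₂ > ⋯ > x_d > 0}`. -/
def WeylChamber (d : ℕ) : Set (Fin d → ℤ) :=
  {x | (∀ i j : Fin d, i < j → x j < x i) ∧ ∀ i, 0 < x i}

/-- `q` is obtained from `p` by adding a positive unit coordinate vector. -/
def IsPosStep {d : ℕ} (p q : Fin d → ℤ) : Prop :=
  ∃ i : Fin d, q = p + Pi.single i 1

/-- A walk of length `n` starting at `lam`, staying in the Weyl chamber `W^d`, all of
whose steps are positive unit coordinate vectors. -/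
def IsPosWalk (d n : ℕ) (lam : Fin d → ℤ) (p : Fin (n + 1) → (Fin d → ℤ)) : Prop :=
  p 0 = lam ∧ (∀ k, p k ∈ WeylChamber d) ∧
    ∀ k : Fin n, IsPosStep (p k.castSucc) (p k.succ)

/-- The hyperbolic Bessel function of the first kind `I_s(2t)`, as a formal power
series in `t` over `ℚ`:  `I_s(2t) = Σ_{k,m ≥ 0, m - k = s} t^{m+k}/(m! k!)`,
i.e. the coefficient of `z^s` in `exp(t(z + z⁻¹))`. -/
noncomputable def besselI (s : ℤ) : PowerSeries ℚ :=
  PowerSeries.mk fun n =>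
    ∑ k ∈ Finset.range (n + 1),
      if ((n - k : ℕ) : ℤ) - (k : ℤ) = s then
        (1 : ℚ) / ((n - k).factorial * k.factorial) else 0

/-- `u_d(λ;ν;n) = Σ_{μ ∈ W^d, |μ| = n + |λ|} f(λ;μ)·f(ν;μ)`: the number of pairs
consisting of a walk of length `n` from `lam` and a walk of length `n + (|λ| - |ν|)`
from `nu` (positive unit coordinate steps, staying in `W^d`) with the same endpoint. -/
noncomputable def uPairCount₂ (d : ℕ) (lam nu : Fin d → ℤ) (n : ℕ) : ℕ :=
  Nat.card {pq : (Fin (n + 1) → (Fin d → ℤ)) ×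
      (Fin (n + ((∑ i, lam i) - ∑ i, nu i).toNat + 1) → (Fin d → ℤ)) //
    IsPosWalk d n lam pq.1 ∧
      IsPosWalk d (n + ((∑ i, lam i) - ∑ i, nu i).toNat) nu pq.2 ∧
      pq.1 (Fin.last n) = pq.2 (Fin.last (n + ((∑ i, lam i) - ∑ i, nu i).toNat))}

/-!
The number of walks of length `n` from `λ` to `μ` inside `W^d` is `n! · h(λ; μ)`, where
`h(λ; μ) = invFactDet λ μ = det (1 / (μ_i - λ_j)!)`. Expanding the determinant gives
`Σ_i h(λ; μ - e_i) = (|μ| - |λ|) · h(λ; μ)`, the last-step recursion of the walk count, and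
`h(λ; μ - e_i) = 0` whenever `μ - e_i` leaves the chamber, because two rows coincide or a row
vanishes.

Since `I_{a-b}(2t) = Σ_x t^(x-a) / (x-a)! · t^(x-b) / (x-b)!`, the Cauchy–Binet formula (with
the sum over `x` truncated, which does not change the coefficients of a fixed degree) expands the
Bessel determinant as `Σ_{μ ∈ W^d} t^(2|μ| - |λ| - |ν|) · h(λ; μ) · h(ν; μ)`; comparing
coefficients with the walk counts gives the theorem.
-/

open Finset Matrix

namespace Matrix

theorem dvd_det_sub_det {n R : Type*} [Fintype n] [DecidableEq n] [CommRing R] (r : R)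
    (A B : Matrix n n R) (h : ∀ i j, r ∣ A i j - B i j) : r ∣ A.det - B.det := by
  have hAB : (Ideal.Quotient.mk (Ideal.span {r})).mapMatrix A =
      (Ideal.Quotient.mk (Ideal.span {r})).mapMatrix B := by
    ext i j
    exact Ideal.Quotient.eq.2 (Ideal.mem_span_singleton.2 (h i j))
  have hdet := congrArg det hAB
  rw [← RingHom.map_det, ← RingHom.map_det] at hdet
  exact Ideal.mem_span_singleton.1 (Ideal.Quotient.eq.1 hdet)

end Matrix

theorem PowerSeries.coeff_det_eq_of_coeff_eq {n R : Type*} [Fintype n] [DecidableEq n]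
    [CommRing R] {A B : Matrix n n (PowerSeries R)} (M : ℕ)
    (h : ∀ i j, ∀ m ≤ M, coeff m (A i j) = coeff m (B i j)) :
    coeff M A.det = coeff M B.det := by
  have hdvd : (X : PowerSeries R) ^ (M + 1) ∣ A.det - B.det :=
    Matrix.dvd_det_sub_det _ A B fun i j => X_pow_dvd_iff.2 fun m hm => by
      rw [map_sub, h i j m (by omega), sub_self]
  simpa [sub_eq_zero] using X_pow_dvd_iff.1 hdvd M (by omega)

section CauchyBinet

variable {ι M : Type*} [LinearOrder ι] [AddCommMonoid M] {d : ℕ}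

/-- An injective tuple is uniquely a strictly decreasing tuple composed with a permutation. -/
theorem Finset.sum_filter_injective_eq_sum_strictAnti (s : Finset ι) (F : (Fin d → ι) → M) :
    ∑ χ ∈ (Fintype.piFinset fun _ => s) with Function.Injective χ, F χ =
      ∑ y ∈ (Fintype.piFinset fun _ => s) with StrictAnti y,
        ∑ τ : Equiv.Perm (Fin d), F (y ∘ τ) := by
  classical
  rw [← sum_product']
  refine (sum_bij (fun z _ => z.1 ∘ z.2) ?_ ?_ ?_ ?_).symm
  · rintro ⟨y, τ⟩ hz
    simp only [mem_product, mem_filter, Fintype.mem_piFinset] at hz ⊢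
    exact ⟨fun k => hz.1.1 (τ k), hz.1.2.injective.comp τ.injective⟩
  · rintro ⟨y, τ⟩ hz ⟨y', τ'⟩ hz' heq
    simp only [mem_product, mem_filter] at hz hz'
    have h1 : (y ∘ τ) ∘ ⇑τ⁻¹ = y := by ext; simp
    have h2 : (y ∘ τ) ∘ ⇑τ'⁻¹ = y' := by rw [heq]; ext; simp
    have hyy : y = y' := calc
      y = (y ∘ τ) ∘ ⇑τ⁻¹ := h1.symm
      _ = (y ∘ τ) ∘ ⇑τ'⁻¹ :=
        Tuple.unique_antitone (by rw [h1]; exact hz.1.2.antitone)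
          (by rw [h2]; exact hz'.1.2.antitone)
      _ = y' := h2
    subst hyy
    simp only [Prod.mk.injEq, true_and]
    exact Equiv.ext fun x => hz.1.2.injective (congrFun heq x)
  · intro χ hχ
    simp only [mem_filter, Fintype.mem_piFinset] at hχ
    set π : Equiv.Perm (Fin d) := Fin.revPerm.trans (Tuple.sort χ)
    have hanti : StrictAnti (χ ∘ π) :=
      ((Tuple.monotone_sort χ).comp_antitone Fin.rev_anti).strictAnti_of_injective
        (hχ.2.comp π.injective)
    refine ⟨(χ ∘ π, π⁻¹), ?_, ?_⟩
    · simp only [mem_product, mem_filter, Fintype.mem_piFinset, mem_univ]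
      exact ⟨⟨fun k => hχ.1 (π k), hanti⟩, trivial⟩
    · ext x; simp
  · intro _ _; rfl

/-- The Cauchy–Binet formula. -/
theorem Matrix.det_of_sum_mul_eq_sum_strictAnti {R : Type*} [CommRing R] (s : Finset ι)
    (A B : Matrix ι (Fin d) R) :
    det (of fun i j => ∑ x ∈ s, A x i * B x j) =
      ∑ y ∈ (Fintype.piFinset fun _ => s) with StrictAnti y,
        det (A.submatrix y id) * det (B.submatrix y id) := by
  classical
  calc det (of fun i j => ∑ x ∈ s, A x i * B x j)
      = ∑ χ ∈ Fintype.piFinset fun _ => s, (∏ i, A (χ i) i) * det (B.submatrix χ id) := by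
        have hrows : (of fun i j => ∑ x ∈ s, A x i * B x j) =
            fun i => ∑ x ∈ s, fun j => A x i * B x j := by
          ext i j; simp
        rw [hrows]
        exact (detRowAlternating.map_sum_finset _ _).trans
          (sum_congr rfl fun χ _ => det_mul_column (fun i => A (χ i) i) (B.submatrix χ id))
    _ = ∑ χ ∈ (Fintype.piFinset fun _ => s) with Function.Injective χ,
          (∏ i, A (χ i) i) * det (B.submatrix χ id) := by
        refine (sum_filter_of_ne fun χ _ hχ => ?_).symm
        by_contra hinj
        obtain ⟨a, b, hab, hne⟩ := Function.not_injective_iff.1 hinj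
        exact hχ (by rw [det_zero_of_row_eq hne (by ext; simp [hab]), mul_zero])
    _ = ∑ y ∈ (Fintype.piFinset fun _ => s) with StrictAnti y, ∑ τ : Equiv.Perm (Fin d),
          (Equiv.Perm.sign τ : R) * (∏ i, A (y (τ i)) i) * det (B.submatrix y id) := by
        rw [sum_filter_injective_eq_sum_strictAnti]
        refine sum_congr rfl fun y _ => sum_congr rfl fun τ _ => ?_
        rw [show B.submatrix (y ∘ τ) id = (B.submatrix y id).submatrix τ id from rfl,
          det_permute]
        simp only [Function.comp_apply]
        ring
    _ = _ := by
        refine sum_congr rfl fun y _ => ?_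
        rw [← sum_mul, det_apply' (A.submatrix y id)]
        rfl

end CauchyBinet

noncomputable def invFact (z : ℤ) : ℚ := if 0 ≤ z then ((z.toNat).factorial : ℚ)⁻¹ else 0

theorem invFact_of_neg {z : ℤ} (h : z < 0) : invFact z = 0 := by
  simp [invFact, not_le.2 h]

@[simp] theorem invFact_natCast (k : ℕ) : invFact k = ((k.factorial : ℚ))⁻¹ := by
  simp [invFact]

theorem invFact_sub_one (z : ℤ) : invFact (z - 1) = z * invFact z := by
  rcases le_or_gt z 0 with hz | hz
  · rw [invFact_of_neg (by omega)]
    rcases hz.lt_or_eq with hz | rfl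
    · rw [invFact_of_neg hz, mul_zero]
    · simp
  · obtain ⟨k, rfl⟩ : ∃ k : ℕ, z = k + 1 := ⟨(z - 1).toNat, by omega⟩
    rw [add_sub_cancel_right, show (k : ℤ) + 1 = ((k + 1 : ℕ) : ℤ) by push_cast; ring,
      invFact_natCast, invFact_natCast, Nat.factorial_succ]
    push_cast
    field_simp

theorem prod_invFact_sub_single {ι : Type*} [Fintype ι] [DecidableEq ι] (g : ι → ℤ)
    (k : ι) :
    ∏ c, invFact ((g - Pi.single k 1 : ι → ℤ) c) = g k * ∏ c, invFact (g c) := by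
  rw [← mul_prod_erase univ _ (mem_univ k), ← mul_prod_erase univ _ (mem_univ k),
    ← mul_assoc, Pi.sub_apply, Pi.single_eq_same, invFact_sub_one]
  congr 1
  refine prod_congr rfl fun c hc => ?_
  rw [Pi.sub_apply, Pi.single_eq_of_ne (ne_of_mem_erase hc), sub_zero]

section Chamber

variable {d : ℕ}

theorem strictAnti_of_mem_weylChamber {x : Fin d → ℤ} (hx : x ∈ WeylChamber d) :
    StrictAnti x :=
  hx.1

noncomputable def invFactDet (a μ : Fin d → ℤ) : ℚ :=
  det (of fun i j => invFact (μ i - a j))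

theorem sum_invFactDet_sub_single (a μ : Fin d → ℤ) :
    ∑ i, invFactDet a (μ - Pi.single i 1) =
      ((∑ i, μ i) - ∑ i, a i : ℤ) * invFactDet a μ := by
  simp only [invFactDet, det_apply', of_apply]
  rw [sum_comm, mul_sum]
  refine sum_congr rfl fun σ _ => ?_
  set g : Fin d → ℤ := fun c => μ (σ c) - a c
  have hg : ∀ i c, (μ - Pi.single i 1 : Fin d → ℤ) (σ c) - a c =
      (g - Pi.single (σ.symm i) 1 : Fin d → ℤ) c := by
    intro i c
    simp only [g, Pi.sub_apply, Pi.single_apply, ← Equiv.eq_symm_apply]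
    ring
  have hsum : ∑ k, g k = (∑ i, μ i) - ∑ i, a i := by
    simp only [g, sum_sub_distrib, Equiv.sum_comp σ μ]
  simp only [hg, prod_invFact_sub_single]
  rw [Equiv.sum_comp σ.symm fun k => (Equiv.Perm.sign σ : ℚ) * (g k * ∏ c, invFact (g c)),
    ← mul_sum, ← sum_mul, ← hsum]
  push_cast
  ring

theorem invFactDet_self {a : Fin d → ℤ} (ha : StrictAnti a) : invFactDet a a = 1 := by
  have htri : (of fun i j => invFact (a i - a j)).IsUpperTriangular := fun i j hij =>
    invFact_of_neg (sub_neg.2 (ha hij))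
  rw [invFactDet, det_of_isUpperTriangular htri]
  simp [show invFact 0 = 1 by simpa using invFact_natCast 0]

theorem Equiv.Perm.exists_le_le_apply (σ : Equiv.Perm (Fin d)) (i : Fin d) :
    ∃ c ≤ i, i ≤ σ c := by
  by_contra! h
  have := card_le_card_of_injOn σ (s := Iic i) (t := Iio i)
    (fun c hc => mem_Iio.2 (h c (mem_Iic.1 hc))) σ.injective.injOn
  rw [Fin.card_Iic, Fin.card_Iio] at this
  omega

theorem invFactDet_eq_zero_of_lt {a μ : Fin d → ℤ} (ha : Antitone a) (hμ : Antitone μ)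
    {i : Fin d} (h : μ i < a i) : invFactDet a μ = 0 := by
  rw [invFactDet, det_apply']
  refine sum_eq_zero fun σ _ => ?_
  obtain ⟨c, hci, hic⟩ := σ.exists_le_le_apply i
  refine mul_eq_zero_of_right _ (prod_eq_zero (mem_univ c) (invFact_of_neg ?_))
  have := hμ hic
  have := ha hci
  omega

theorem le_of_invFactDet_ne_zero {a μ : Fin d → ℤ} (ha : Antitone a) (hμ : Antitone μ)
    (h : invFactDet a μ ≠ 0) : a ≤ μ := fun _ =>
  not_lt.1 fun hi => h (invFactDet_eq_zero_of_lt ha hμ hi)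

theorem sum_le_sum_of_invFactDet_ne_zero {a μ : Fin d → ℤ} (ha : Antitone a)
    (hμ : Antitone μ) (h : invFactDet a μ ≠ 0) : ∑ i, a i ≤ ∑ i, μ i :=
  sum_le_sum fun i _ => le_of_invFactDet_ne_zero ha hμ h i

theorem invFactDet_of_sum_eq {a μ : Fin d → ℤ} (ha : StrictAnti a) (hμ : Antitone μ)
    (hsum : ∑ i, μ i = ∑ i, a i) : invFactDet a μ = if μ = a then 1 else 0 := by
  split_ifs with h
  · subst h
    exact invFactDet_self ha
  · by_contra hne
    have hle := le_of_invFactDet_ne_zero ha.antitone hμ hne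
    exact h (funext fun i =>
      ((sum_eq_sum_iff_of_le fun i _ => hle i).1 hsum.symm i (mem_univ i)).symm)

theorem invFactDet_sub_single_eq_zero {a μ : Fin d → ℤ} (ha : ∀ j, 0 < a j)
    (hμ : μ ∈ WeylChamber d) {i : Fin d} (hi : μ - Pi.single i 1 ∉ WeylChamber d) :
    invFactDet a (μ - Pi.single i 1) = 0 := by
  set ν := μ - Pi.single i 1
  have hν : ∀ k, μ k - 1 ≤ ν k ∧ ν k ≤ μ k := fun k => by
    simp only [ν, Pi.sub_apply, Pi.single_apply]; split_ifs <;> omega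
  have hanti : Antitone ν := fun k l hkl => by
    rcases hkl.lt_or_eq with hkl | rfl
    · have := hμ.1 k l hkl; have := hν k; have := hν l; omega
    · rfl
  by_cases hinj : Function.Injective ν
  · obtain ⟨k, hk⟩ : ∃ k, ν k ≤ 0 := by
      by_contra! hpos
      exact hi ⟨fun _ _ hkl => hanti.strictAnti_of_injective hinj hkl, hpos⟩
    exact det_eq_zero_of_row_eq_zero k fun j => invFact_of_neg (by have := ha j; omega)
  · obtain ⟨k, l, hkl, hne⟩ := Function.not_injective_iff.1 hinj
    exact det_zero_of_row_eq hne (by ext j; simp [hkl])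

theorem IsPosWalk.snoc {n : ℕ} {lam q : Fin d → ℤ} {p : Fin (n + 1) → Fin d → ℤ}
    (hp : IsPosWalk d n lam p) (hq : q ∈ WeylChamber d) (hstep : IsPosStep (p (Fin.last n)) q) :
    IsPosWalk d (n + 1) lam (Fin.snoc p q) := by
  obtain ⟨h0, hW, hs⟩ := hp
  refine ⟨by simpa using h0, Fin.lastCases ?_ fun k => ?_, Fin.lastCases ?_ fun k => ?_⟩
  · simpa using hq
  · simpa using hW k
  · simpa using hstep
  · rw [Fin.succ_castSucc, Fin.snoc_castSucc, Fin.snoc_castSucc]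
    exact hs k

theorem IsPosWalk.init {n : ℕ} {lam : Fin d → ℤ} {p : Fin (n + 2) → Fin d → ℤ}
    (hp : IsPosWalk d (n + 1) lam p) : IsPosWalk d n lam (Fin.init p) := by
  obtain ⟨h0, hW, hs⟩ := hp
  refine ⟨h0, fun k => hW _, fun k => ?_⟩
  simpa [Fin.init, ← Fin.succ_castSucc] using hs k.castSucc

def PosWalkTo (d n : ℕ) (lam mu : Fin d → ℤ) : Type :=
  {p : Fin (n + 1) → Fin d → ℤ // IsPosWalk d n lam p ∧ p (Fin.last n) = mu}

namespace PosWalkTo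

variable {n : ℕ} {lam mu : Fin d → ℤ}

theorem mem_weylChamber (w : PosWalkTo d n lam mu) : mu ∈ WeylChamber d :=
  w.2.2 ▸ w.2.1.2.1 (Fin.last n)

def snoc (hmu : mu ∈ WeylChamber d) :
    (Σ i : Fin d, PosWalkTo d n lam (mu - Pi.single i 1)) → PosWalkTo d (n + 1) lam mu :=
  fun w => ⟨Fin.snoc w.2.1 mu, w.2.2.1.snoc hmu ⟨w.1, by rw [w.2.2.2, sub_add_cancel]⟩,
    Fin.snoc_last ..⟩

theorem snoc_bijective (hmu : mu ∈ WeylChamber d) :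
    Function.Bijective (snoc (n := n) (lam := lam) hmu) := by
  constructor
  · rintro ⟨i, p, hp, hpi⟩ ⟨i', p', hp', hpi'⟩ h
    have hpp' : p = p' := by
      simpa [snoc] using congrArg Fin.init (congrArg Subtype.val h)
    subst hpp'
    obtain rfl : i = i' := by
      by_contra hne
      have := congrFun (hpi.symm.trans hpi') i
      simp [Pi.single_eq_of_ne hne] at this
    rfl
  · rintro ⟨P, hP, hend⟩
    obtain ⟨i, hi⟩ := hP.2.2 (Fin.last n)
    rw [Fin.succ_last, hend] at hi
    refine ⟨⟨i, Fin.init P, hP.init, eq_sub_of_add_eq hi.symm⟩, Subtype.ext ?_⟩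
    change Fin.snoc (Fin.init P) mu = P
    rw [← hend, Fin.snoc_init_self]

instance finite : ∀ n (mu : Fin d → ℤ), Finite (PosWalkTo d n lam mu)
  | 0, mu =>
    have : Subsingleton (PosWalkTo d 0 lam mu) := ⟨fun v w =>
      Subtype.ext (funext fun k => by rw [Fin.fin_one_eq_zero k, v.2.1.1, w.2.1.1])⟩
    Finite.of_subsingleton
  | n + 1, mu => by
    by_cases hmu : mu ∈ WeylChamber d
    · have := fun i : Fin d => finite n (mu - Pi.single i 1)
      exact Finite.of_surjective _ (snoc_bijective hmu).2
    · have : IsEmpty (PosWalkTo d (n + 1) lam mu) := ⟨fun w => hmu w.mem_weylChamber⟩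
      infer_instance

theorem card_succ (hmu : mu ∈ WeylChamber d) :
    Nat.card (PosWalkTo d (n + 1) lam mu) =
      ∑ i, Nat.card (PosWalkTo d n lam (mu - Pi.single i 1)) := by
  rw [← Nat.card_eq_of_bijective _ (snoc_bijective hmu), Nat.card_sigma]

theorem card_zero (hlam : lam ∈ WeylChamber d) :
    Nat.card (PosWalkTo d 0 lam mu) = if mu = lam then 1 else 0 := by
  split_ifs with h
  · subst h
    have : Unique (PosWalkTo d 0 mu mu) := by
      refine ⟨⟨⟨fun _ => mu, ⟨rfl, fun _ => hlam, Fin.elim0⟩, rfl⟩⟩,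
        fun w => Subtype.ext ?_⟩
      funext k
      rw [Fin.fin_one_eq_zero k, w.2.1.1]
      rfl
    exact Nat.card_unique
  · have : IsEmpty (PosWalkTo d 0 lam mu) := ⟨fun w => h (w.2.2.symm.trans w.2.1.1)⟩
    exact Nat.card_of_isEmpty

theorem card_eq_factorial_mul_invFactDet (hlam : lam ∈ WeylChamber d) (n : ℕ)
    {mu : Fin d → ℤ} (hmu : mu ∈ WeylChamber d) :
    (Nat.card (PosWalkTo d n lam mu) : ℚ) =
      if ∑ i, mu i = ∑ i, lam i + n then n.factorial * invFactDet lam mu else 0 := by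
  induction n generalizing mu with
  | zero =>
    rw [card_zero hlam]
    by_cases hsum : ∑ i, mu i = ∑ i, lam i
    · simp [hsum, invFactDet_of_sum_eq hlam.1 (strictAnti_of_mem_weylChamber hmu).antitone hsum]
    · have hne : mu ≠ lam := fun h => hsum (h ▸ rfl)
      simp [hsum, hne]
  | succ n ih =>
    have hterm : ∀ i, (Nat.card (PosWalkTo d n lam (mu - Pi.single i 1)) : ℚ) =
        if ∑ i, mu i = ∑ i, lam i + (n + 1 : ℕ) then
          n.factorial * invFactDet lam (mu - Pi.single i 1) else 0 := by
      intro i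
      have hsum : ∑ k, (mu - Pi.single i 1 : Fin d → ℤ) k = ∑ k, mu k - 1 := by
        simp [sum_sub_distrib]
      by_cases hi : mu - Pi.single i 1 ∈ WeylChamber d
      · rw [ih hi, hsum]
        push_cast
        exact if_congr (by omega) rfl rfl
      · have : IsEmpty (PosWalkTo d n lam (mu - Pi.single i 1)) :=
          ⟨fun w => hi w.mem_weylChamber⟩
        rw [Nat.card_of_isEmpty, invFactDet_sub_single_eq_zero hlam.2 hmu hi]
        simp
    rw [card_succ hmu, Nat.cast_sum, sum_congr rfl fun i _ => hterm i]
    split_ifs with hsum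
    · rw [← mul_sum, sum_invFactDet_sub_single, show (∑ i, mu i) - ∑ i, lam i = n + 1 by
        push_cast at hsum; omega, Nat.factorial_succ]
      push_cast
      ring
    · simp

theorem sum_eq_sum_add (hlam : lam ∈ WeylChamber d) (w : PosWalkTo d n lam mu) :
    ∑ i, mu i = ∑ i, lam i + n := by
  have hpos : (Nat.card (PosWalkTo d n lam mu) : ℚ) ≠ 0 := by
    have : Nonempty (PosWalkTo d n lam mu) := ⟨w⟩
    exact_mod_cast Nat.card_pos.ne'
  rw [card_eq_factorial_mul_invFactDet hlam n w.mem_weylChamber] at hpos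
  by_contra h
  exact hpos (if_neg h)

theorem card_mul_card_eq {nu : Fin d → ℤ} (hlam : lam ∈ WeylChamber d)
    (hnu : nu ∈ WeylChamber d) (hmu : mu ∈ WeylChamber d) {D : ℕ}
    (hD : (D : ℤ) = ∑ i, lam i - ∑ i, nu i) (n : ℕ) :
    (Nat.card (PosWalkTo d n lam mu) * Nat.card (PosWalkTo d (n + D) nu mu) : ℚ) =
      n.factorial * (n + D).factorial *
        if 2 * ∑ i, mu i = (2 * n + D : ℕ) + ∑ i, lam i + ∑ i, nu i then
          invFactDet lam mu * invFactDet nu mu else 0 := by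
  have hnu_iff : ∑ i, mu i = ∑ i, nu i + (n + D : ℕ) ↔ ∑ i, mu i = ∑ i, lam i + n := by
    push_cast; omega
  have hcoeff_iff : 2 * ∑ i, mu i = (2 * n + D : ℕ) + ∑ i, lam i + ∑ i, nu i ↔
      ∑ i, mu i = ∑ i, lam i + n := by
    push_cast; omega
  rw [card_eq_factorial_mul_invFactDet hlam n hmu,
    card_eq_factorial_mul_invFactDet hnu (n + D) hmu]
  simp only [hnu_iff, hcoeff_iff]
  split_ifs <;> ring

end PosWalkTo

theorem card_posWalk_pairs_eq_sum {n m : ℕ} {lam nu : Fin d → ℤ} (T : Finset (Fin d → ℤ))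
    (hT : ∀ mu, PosWalkTo d n lam mu → mu ∈ T) :
    Nat.card {pq : (Fin (n + 1) → Fin d → ℤ) × (Fin (m + 1) → Fin d → ℤ) //
        IsPosWalk d n lam pq.1 ∧ IsPosWalk d m nu pq.2 ∧
          pq.1 (Fin.last n) = pq.2 (Fin.last m)} =
      ∑ mu ∈ T, Nat.card (PosWalkTo d n lam mu) * Nat.card (PosWalkTo d m nu mu) := by
  refine (Nat.card_congr (β := Σ mu : T, PosWalkTo d n lam mu × PosWalkTo d m nu mu)
    { toFun := fun pq => ⟨⟨pq.1.1 (Fin.last n), hT _ ⟨pq.1.1, pq.2.1, rfl⟩⟩,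
        ⟨pq.1.1, pq.2.1, rfl⟩, ⟨pq.1.2, pq.2.2.1, pq.2.2.2.symm⟩⟩
      invFun := fun w =>
        ⟨(w.2.1.1, w.2.2.1), w.2.1.2.1, w.2.2.2.1, w.2.1.2.2.trans w.2.2.2.2.symm⟩
      left_inv := fun _ => rfl
      right_inv := by
        rintro ⟨⟨mu, hmu⟩, ⟨p, hp, hpmu⟩, q⟩
        cases hpmu
        rfl }).trans ?_
  rw [Nat.card_sigma, ← sum_coe_sort T]
  simp only [Nat.card_prod]

noncomputable def chamberBox (d : ℕ) (N : ℤ) : Finset (Fin d → ℤ) :=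
  {y ∈ Fintype.piFinset fun _ => Icc 1 N | StrictAnti y}

theorem mem_chamberBox {N : ℤ} {y : Fin d → ℤ} :
    y ∈ chamberBox d N ↔ y ∈ WeylChamber d ∧ ∀ i, y i ≤ N := by
  simp only [chamberBox, mem_filter, Fintype.mem_piFinset, mem_Icc]
  exact ⟨fun h => ⟨⟨h.2, fun i => (h.1 i).1⟩, fun i => (h.1 i).2⟩,
    fun h => ⟨fun i => ⟨h.1.2 i, h.2 i⟩, h.1.1⟩⟩

theorem PosWalkTo.mem_chamberBox {n : ℕ} {lam mu : Fin d → ℤ} {N : ℤ}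
    (hlam : lam ∈ WeylChamber d) (hN : ∑ i, lam i + n ≤ N) (w : PosWalkTo d n lam mu) :
    mu ∈ chamberBox d N := by
  have hmu := w.mem_weylChamber
  refine _root_.mem_chamberBox.2 ⟨hmu, fun i => ?_⟩
  have := single_le_sum (fun j _ => (hmu.2 j).le) (mem_univ i)
  have := w.sum_eq_sum_add hlam
  omega

open PowerSeries

/-- `t ^ (x - a) / (x - a)!`, which is `0` for `x < a`. -/
noncomputable def powDivFact (a x : ℤ) : PowerSeries ℚ :=
  monomial (x - a).toNat (invFact (x - a))

/-- `I_{a-b}(2t) = ∑_x t^(x-a) t^(x-b) / ((x-a)! (x-b)!)`; up to degree `m` only `x ≤ b + m`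
contributes. -/
theorem coeff_besselI_eq_sum {a b N : ℤ} {m : ℕ} (hb : 1 ≤ b) (hN : b + m ≤ N) :
    coeff m (besselI (a - b)) = ∑ x ∈ Icc 1 N, coeff m (powDivFact a x * powDivFact b x) := by
  simp only [powDivFact, monomial_mul_monomial, coeff_monomial]
  rw [← sum_subset (Icc_subset_Icc hb hN) fun x hx hx' => ?vanish, besselI, coeff_mk]
  case vanish =>
    simp only [mem_Icc, not_and_or, not_le] at hx hx'
    rcases hx' with hx' | hx'
    · simp [invFact_of_neg (show x - b < 0 by omega)]
    · exact if_neg (by omega)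
  refine sum_nbij' (fun k => b + m - k) (fun x => (b + m - x).toNat) ?_ ?_ ?_ ?_ fun k hk => ?_
  · intro k hk; simp only [mem_range, mem_Icc] at hk ⊢; omega
  · intro x hx; simp only [mem_range, mem_Icc] at hx ⊢; omega
  · intro k hk; simp only [mem_range] at hk; omega
  · intro x hx; simp only [mem_Icc] at hx; omega
  rw [mem_range] at hk
  have hxb : b + m - k - b = ((m - k : ℕ) : ℤ) := by omega
  rw [hxb, Int.toNat_natCast, invFact_natCast]
  by_cases hcond : ((m - k : ℕ) : ℤ) - k = a - b
  · rw [if_pos hcond, show b + m - k - a = k by omega, Int.toNat_natCast, invFact_natCast,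
      if_pos (by omega), one_div, mul_inv, mul_comm]
  · rw [if_neg hcond]
    split_ifs with h
    · rw [invFact_of_neg (by omega), zero_mul]
    · rfl

theorem det_powDivFact (a y : Fin d → ℤ) :
    det (of fun i j => powDivFact (a j) (y i)) =
      monomial ((∑ i, y i) - ∑ i, a i).toNat (invFactDet a y) := by
  rw [det_apply', invFactDet, det_apply', map_sum]
  refine sum_congr rfl fun σ _ => ?_
  simp only [of_apply, powDivFact, prod_monomial]
  rw [← map_intCast (C (R := ℚ)), ← monomial_zero_eq_C_apply, monomial_mul_monomial, zero_add]
  by_cases hneg : ∃ i, y (σ i) - a i < 0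
  · obtain ⟨i, hi⟩ := hneg
    simp [prod_eq_zero (f := fun i => invFact (y (σ i) - a i)) (mem_univ i) (invFact_of_neg hi)]
  · push Not at hneg
    congr 1
    have : ((∑ i, (y (σ i) - a i).toNat : ℕ) : ℤ) = (∑ i, y i) - ∑ i, a i := by
      push_cast [Int.toNat_of_nonneg (hneg _)]
      rw [sum_sub_distrib, Equiv.sum_comp σ y]
    rw [← this, Int.toNat_natCast]

theorem coeff_det_besselI {lam nu : Fin d → ℤ} (hlam : Antitone lam)
    (hnu : nu ∈ WeylChamber d) {M : ℕ} {N : ℤ} (hN : M + ∑ i, nu i ≤ N) :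
    coeff M (det (of fun i j => besselI (lam i - nu j))) =
      ∑ y ∈ chamberBox d N with 2 * ∑ i, y i = M + ∑ i, lam i + ∑ i, nu i,
        invFactDet lam y * invFactDet nu y := by
  have htrunc : ∀ i j, ∀ m ≤ M, coeff m (besselI (lam i - nu j)) =
      coeff m (∑ x ∈ Icc 1 N, powDivFact (lam i) x * powDivFact (nu j) x) := fun i j m hm => by
    have := single_le_sum (fun k _ => (hnu.2 k).le) (mem_univ j)
    rw [coeff_besselI_eq_sum (N := N) (hnu.2 j) (by omega), map_sum]
  have hCB := det_of_sum_mul_eq_sum_strictAnti (Icc 1 N)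
    (of fun x i => powDivFact (lam i) x) (of fun x j => powDivFact (nu j) x)
  simp only [of_apply] at hCB
  rw [PowerSeries.coeff_det_eq_of_coeff_eq (A := of fun i j => besselI (lam i - nu j))
    (B := of fun i j => ∑ x ∈ Icc 1 N, powDivFact (lam i) x * powDivFact (nu j) x) M htrunc,
    hCB, map_sum]
  change ∑ y ∈ chamberBox d N, _ = _
  rw [sum_filter]
  refine sum_congr rfl fun y hy => ?_
  have hyA := strictAnti_of_mem_weylChamber (mem_chamberBox.1 hy).1
  erw [det_powDivFact lam y, det_powDivFact nu y]
  rw [monomial_mul_monomial, coeff_monomial]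
  by_cases hc : invFactDet lam y * invFactDet nu y = 0
  · simp [hc]
  have := sum_le_sum_of_invFactDet_ne_zero hlam hyA.antitone (left_ne_zero_of_mul hc)
  have := sum_le_sum_of_invFactDet_ne_zero (strictAnti_of_mem_weylChamber hnu).antitone
    hyA.antitone (right_ne_zero_of_mul hc)
  split_ifs <;> first | rfl | omega

end Chamber

theorem generalized_gessel_two_shapes_general (d : ℕ) (lam nu : Fin d → ℤ)
    (hlam : lam ∈ WeylChamber d) (hnu : nu ∈ WeylChamber d)
    (hle : ∑ i, nu i ≤ ∑ i, lam i) :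
    (∀ n : ℕ, (uPairCount₂ d lam nu n : ℚ) =
        (n.factorial : ℚ) *
          ((n + ((∑ i, lam i) - ∑ i, nu i).toNat).factorial : ℚ) *
          PowerSeries.coeff (R := ℚ) (2 * n + ((∑ i, lam i) - ∑ i, nu i).toNat)
            (Matrix.det (Matrix.of fun i j : Fin d => besselI (lam i - nu j)))) ∧
      (∀ m : ℕ, (¬ ∃ n : ℕ, m = 2 * n + ((∑ i, lam i) - ∑ i, nu i).toNat) →
        PowerSeries.coeff (R := ℚ) m
          (Matrix.det (Matrix.of fun i j : Fin d => besselI (lam i - nu j))) = 0) := by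
  have hlamA := (strictAnti_of_mem_weylChamber hlam).antitone
  have hnu0 : 0 ≤ ∑ i, nu i := sum_nonneg fun i _ => (hnu.2 i).le
  have hD : (((∑ i, lam i) - ∑ i, nu i).toNat : ℤ) = (∑ i, lam i) - ∑ i, nu i :=
    Int.toNat_of_nonneg (by omega)
  refine ⟨fun n => ?_, fun m hm => ?_⟩
  · set N := ∑ i, lam i + ∑ i, nu i + 2 * n
    rw [uPairCount₂, card_posWalk_pairs_eq_sum (chamberBox d N)
      fun mu w => w.mem_chamberBox hlam (by omega), coeff_det_besselI hlamA hnu (N := N) (by omega),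
      Nat.cast_sum, sum_filter, mul_sum]
    exact sum_congr rfl fun y hy => by
      rw [Nat.cast_mul, PosWalkTo.card_mul_card_eq hlam hnu (mem_chamberBox.1 hy).1 hD]
  · rw [coeff_det_besselI hlamA hnu (N := m + ∑ i, nu i) le_rfl]
    refine sum_eq_zero fun y hy => by_contra fun hne => ?_
    rw [mem_filter, mem_chamberBox] at hy
    have := sum_le_sum_of_invFactDet_ne_zero hlamA
      (strictAnti_of_mem_weylChamber hy.1.1).antitone (left_ne_zero_of_mul hne)
    exact hm ⟨((∑ i, y i) - ∑ i, lam i).toNat, by omega⟩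

/-- For `λ, ν ∈ W^d` with `|λ| ≥ |ν|` and `D = |λ| - |ν|`,
`Σ_{n ≥ 0} u_d(λ;ν;n) t^{2n+D}/(n!(n+D)!) = det( I_{λ_i - ν_j}(2t) )_{1 ≤ i,j ≤ d}`:
coefficientwise, `u_d(λ;ν;n)` is `n!(n+D)!` times the coefficient of `t^{2n+D}` in
the determinant, and every coefficient of `t^m` with `m` not of the form `2n + D`
vanishes. -/
theorem generalized_gessel_two_shapes (d : ℕ) (hd : 1 ≤ d) (lam nu : Fin d → ℤ)
    (hlam : lam ∈ WeylChamber d) (hnu : nu ∈ WeylChamber d)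
    (hle : ∑ i, nu i ≤ ∑ i, lam i) :
    (∀ n : ℕ, (uPairCount₂ d lam nu n : ℚ) =
        (n.factorial : ℚ) *
          ((n + ((∑ i, lam i) - ∑ i, nu i).toNat).factorial : ℚ) *
          PowerSeries.coeff (R := ℚ) (2 * n + ((∑ i, lam i) - ∑ i, nu i).toNat)
            (Matrix.det (Matrix.of fun i j : Fin d => besselI (lam i - nu j)))) ∧
      (∀ m : ℕ, (¬ ∃ n : ℕ, m = 2 * n + ((∑ i, lam i) - ∑ i, nu i).toNat) →
        PowerSeries.coeff (R := ℚ) m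
          (Matrix.det (Matrix.of fun i j : Fin d => besselI (lam i - nu j))) = 0) :=
  generalized_gessel_two_shapes_general d lam nu hlam hnu hle
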